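/- Continuing the BKM07 robustness argument: suppose additionally a unitary U_R on ℂ²⊗H_E satisfies U_R|0,e₀⟩ = |0,f₀⟩ and U_R|1,e₃⟩ = |1,f₃⟩ with unit vectors e₀, e₃, f₀, f₃ ∈ H_E. Then U_R U_F|+,χ⟩ = (1/2)|+⟩⊗(f₀+f₃) + (1/2)|−⟩⊗(f₀−f₃), and if the |−⟩ component vanishes (no X-basis error on reflection) then f₀ = f₃, so the output state is the product state |+⟩⊗f₀. -/

import Mathlib

/-- Elementary tensor of a (coefficient vector on) qubit with an ancilla vector. -/
noncomputable def tens {d : ℕ} (q : Fin 2 → ℂ) (v : EuclideanSpace ℂ (Fin d)) :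
    EuclideanSpace ℂ (Fin 2 × Fin d) :=
  WithLp.toLp 2 (fun p => q p.1 * v p.2)

/-- Computational basis coefficient vector |a⟩ of a qubit. -/
def ket (a : Fin 2) : Fin 2 → ℂ := fun b => if b = a then 1 else 0

/-- The |+⟩ coefficient vector. -/
noncomputable def ketP : Fin 2 → ℂ := fun _ => (Real.sqrt 2 : ℂ)⁻¹

/-- The |−⟩ coefficient vector. -/
noncomputable def ketM : Fin 2 → ℂ :=
  fun b => if b = 0 then (Real.sqrt 2 : ℂ)⁻¹ else -(Real.sqrt 2 : ℂ)⁻¹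

/-!
Rewrite `|0⟩ = (|+⟩ + |−⟩)/√2` and `|1⟩ = (|+⟩ − |−⟩)/√2` and expand `⊗` bilinearly;
since `|−⟩ ≠ 0`, the `|−⟩` term vanishes only when `f₀ = f₃`.
-/

section Tens

variable {d : ℕ}

@[simp]
lemma tens_apply (q : Fin 2 → ℂ) (v : EuclideanSpace ℂ (Fin d)) (p : Fin 2 × Fin d) :
    tens q v p = q p.1 * v p.2 :=
  rfl

lemma tens_add_left (q q' : Fin 2 → ℂ) (v : EuclideanSpace ℂ (Fin d)) :
    tens (q + q') v = tens q v + tens q' v := by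
  ext p
  simp [add_mul]

lemma tens_sub_left (q q' : Fin 2 → ℂ) (v : EuclideanSpace ℂ (Fin d)) :
    tens (q - q') v = tens q v - tens q' v := by
  ext p
  simp [sub_mul]

lemma tens_smul_left (c : ℂ) (q : Fin 2 → ℂ) (v : EuclideanSpace ℂ (Fin d)) :
    tens (c • q) v = c • tens q v := by
  ext p
  simp [mul_assoc]

lemma tens_add_right (q : Fin 2 → ℂ) (v w : EuclideanSpace ℂ (Fin d)) :
    tens q (v + w) = tens q v + tens q w := by
  ext p
  simp [mul_add]

lemma tens_sub_right (q : Fin 2 → ℂ) (v w : EuclideanSpace ℂ (Fin d)) :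
    tens q (v - w) = tens q v - tens q w := by
  ext p
  simp [mul_sub]

lemma eq_zero_of_tens_eq_zero {q : Fin 2 → ℂ} {v : EuclideanSpace ℂ (Fin d)} (hq : q ≠ 0)
    (h : tens q v = 0) : v = 0 := by
  obtain ⟨a, ha⟩ := Function.ne_iff.mp hq
  ext j
  exact (mul_eq_zero.mp (congrArg (fun w => w (a, j)) h)).resolve_left ha

end Tens

lemma sqrt_two_inv_mul_self : (Real.sqrt 2 : ℂ)⁻¹ * (Real.sqrt 2 : ℂ)⁻¹ = 1 / 2 := by
  rw [← mul_inv, ← Complex.ofReal_mul, Real.mul_self_sqrt zero_le_two]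
  norm_num

lemma ket_zero_eq : ket 0 = (Real.sqrt 2 : ℂ)⁻¹ • (ketP + ketM) := by
  ext b
  fin_cases b <;> simp [ket, ketP, ketM]
  linear_combination (-2 : ℂ) * sqrt_two_inv_mul_self

lemma ket_one_eq : ket 1 = (Real.sqrt 2 : ℂ)⁻¹ • (ketP - ketM) := by
  ext b
  fin_cases b <;> simp [ket, ketP, ketM]
  linear_combination (-2 : ℂ) * sqrt_two_inv_mul_self

lemma ketM_ne_zero : ketM ≠ 0 := fun h => by
  simpa [ketM] using congrFun h 0

lemma inv_sqrt_two_smul_tens_ket_zero_add_tens_ket_one {d : ℕ} (v w : EuclideanSpace ℂ (Fin d)) :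
    (Real.sqrt 2 : ℂ)⁻¹ • (tens (ket 0) v + tens (ket 1) w) =
      (1 / 2 : ℂ) • tens ketP (v + w) + (1 / 2 : ℂ) • tens ketM (v - w) := by
  rw [ket_zero_eq, ket_one_eq, tens_smul_left, tens_smul_left, tens_add_left, tens_sub_left,
    tens_add_right, tens_sub_right, ← sqrt_two_inv_mul_self]
  module

theorem bkm07_reverse_robustness_general {d : ℕ}
    (UF UR : EuclideanSpace ℂ (Fin 2 × Fin d) ≃ₗᵢ[ℂ] EuclideanSpace ℂ (Fin 2 × Fin d))
    (χ e0 e3 f0 f3 : EuclideanSpace ℂ (Fin d))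
    (hUF : UF (tens ketP χ) = (Real.sqrt 2 : ℂ)⁻¹ • (tens (ket 0) e0 + tens (ket 1) e3))
    (hUR0 : UR (tens (ket 0) e0) = tens (ket 0) f0)
    (hUR1 : UR (tens (ket 1) e3) = tens (ket 1) f3) :
    UR (UF (tens ketP χ)) =
        (1 / 2 : ℂ) • tens ketP (f0 + f3) + (1 / 2 : ℂ) • tens ketM (f0 - f3) ∧
      ((1 / 2 : ℂ) • tens ketM (f0 - f3) = 0 →
        f0 = f3 ∧ UR (UF (tens ketP χ)) = tens ketP f0) := by
  have hsplit : UR (UF (tens ketP χ)) =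
      (1 / 2 : ℂ) • tens ketP (f0 + f3) + (1 / 2 : ℂ) • tens ketM (f0 - f3) := by
    rw [hUF, map_smul, map_add, hUR0, hUR1, inv_sqrt_two_smul_tens_ket_zero_add_tens_ket_one]
  refine ⟨hsplit, fun hminus => ?_⟩
  have hf : f0 = f3 :=
    sub_eq_zero.mp <| eq_zero_of_tens_eq_zero ketM_ne_zero <|
      (smul_eq_zero.mp hminus).resolve_left (by norm_num)
  refine ⟨hf, ?_⟩
  rw [hsplit, hminus, add_zero, ← hf, tens_add_right]
  module

/-- BKM07 robustness, reverse channel.  With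
U_R|0,e₀⟩ = |0,f₀⟩ and U_R|1,e₃⟩ = |1,f₃⟩, one has
U_RU_F|+,χ⟩ = (1/2)|+⟩⊗(f₀+f₃) + (1/2)|−⟩⊗(f₀−f₃), and if the |−⟩ component
vanishes then f₀ = f₃ and the output is the product state |+⟩⊗f₀. -/
theorem bkm07_reverse_robustness {d : ℕ}
    (UF UR : EuclideanSpace ℂ (Fin 2 × Fin d) ≃ₗᵢ[ℂ] EuclideanSpace ℂ (Fin 2 × Fin d))
    (χ e0 e3 f0 f3 : EuclideanSpace ℂ (Fin d))
    (hχ : ‖χ‖ = 1) (he0 : ‖e0‖ = 1) (he3 : ‖e3‖ = 1) (hf0 : ‖f0‖ = 1) (hf3 : ‖f3‖ = 1)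
    (hUF : UF (tens ketP χ) = (Real.sqrt 2 : ℂ)⁻¹ • (tens (ket 0) e0 + tens (ket 1) e3))
    (hUR0 : UR (tens (ket 0) e0) = tens (ket 0) f0)
    (hUR1 : UR (tens (ket 1) e3) = tens (ket 1) f3) :
    UR (UF (tens ketP χ)) =
        (1 / 2 : ℂ) • tens ketP (f0 + f3) + (1 / 2 : ℂ) • tens ketM (f0 - f3) ∧
      ((1 / 2 : ℂ) • tens ketM (f0 - f3) = 0 →
        f0 = f3 ∧ UR (UF (tens ketP χ)) = tens ketP f0) :=
  bkm07_reverse_robustness_general UF UR χ e0 e3 f0 f3 hUF hUR0 hUR1
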